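/- Let T = (V,E) be a directed tree on V = {1,…,n} with a breadth-first ordering, let (X_1,…,X_n) be a Markov tree process compatible with T over a finite state space S, and fix 1 ≤ i < j ≤ n. Let T_i^j = T_i ∩ {j, j+1,…,n} where T_i is the subtree induced by node i. Then for any y ∈ S^{i-1} and w, w' ∈ S: if T_i^j = ∅ then η_{ij}(y,w,w') = 0, and otherwise η_{ij}(y,w,w') = η_{i j_0}(y,w,w') where j_0 = min T_i^j. -/
import Mathlib


/-- `v` lies in the subtree `T_i` induced by `i` (i.e. `i ⪯_T v` via the parent map). -/
def desc {n : ℕ} (par : Fin n → Fin n) (i v : Fin n) : Prop :=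
  Relation.ReflTransGen (fun a b : Fin n => (b : ℕ) ≠ 0 ∧ par b = a) i v

open Classical in
/-- `T_i^j = T_i ∩ {j, j+1, …, n}`. -/
noncomputable def Tij {n : ℕ} (par : Fin n → Fin n) (i j : Fin n) : Finset (Fin n) :=
  Finset.univ.filter fun v => desc par i v ∧ j ≤ v

open Classical in
/-- Conditional probability, under the Markov tree law, that the coordinates with index `≥ j`
equal `s`, given that the coordinates with index `≤ i` equal the corresponding values of `y`. -/
noncomputable def condP {n : ℕ} {S : Type*} [Fintype S]
    (par : Fin n → Fin n) (p : Fin n → S → S → ℝ) (i j : Fin n)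
    (y : Fin n → S) (s : {v : Fin n // j ≤ v} → S) : ℝ :=
  ∑ x ∈ Finset.univ.filter (fun x : Fin n → S =>
      (∀ v, v ≤ i → x v = y v) ∧ ∀ v : {v : Fin n // j ≤ v}, x v.1 = s v),
    ∏ v ∈ Finset.univ.filter (fun v : Fin n => i < v), p v (x v) (x (par v))

/-- `η_{ij}(y,w,w')`: the total variation distance between the conditional laws of
`X_j,…,X_n` given the two prefixes `y` and `y'` (which agree below `i`). -/
noncomputable def eta {n : ℕ} {S : Type*} [Fintype S]
    (par : Fin n → Fin n) (p : Fin n → S → S → ℝ) (i j : Fin n)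
    (y y' : Fin n → S) : ℝ :=
  (1 / 2) * ∑ s : {v : Fin n // j ≤ v} → S,
    |condP par p i j y s - condP par p i j y' s|

section Aux
variable {n : ℕ} {S : Type*} [Fintype S]

theorem desc_le {par : Fin n → Fin n} (hpar : ∀ v : Fin n, (v : ℕ) ≠ 0 → par v < v)
    {i v : Fin n} (h : desc par i v) : i ≤ v := by
  induction h with
  | refl => exact le_refl i
  | tail _ step ih => exact le_trans ih (le_of_lt (step.2 ▸ hpar _ step.1))

theorem desc_par {par : Fin n → Fin n} {i v : Fin n} (h : desc par i v) (hne : v ≠ i) :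
    desc par i (par v) := by
  rcases (Relation.ReflTransGen.cases_tail h) with h1 | ⟨b, hb, step⟩
  · exact absurd h1 hne
  · rwa [step.2]

theorem desc_step {par : Fin n → Fin n} {i v : Fin n} (h : desc par i (par v))
    (h0 : (v : ℕ) ≠ 0) : desc par i v := h.tail ⟨h0, rfl⟩

theorem fin_ne_zero_of_lt {i v : Fin n} (h : i < v) : (v : ℕ) ≠ 0 := by
  have : (i : ℕ) < (v : ℕ) := h
  omega

open Classical in
noncomputable def AG (par : Fin n → Fin n) (i j' : Fin n) : Finset (Fin n) :=
  Finset.univ.filter fun v => desc par i v ∧ i < v ∧ v < j'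

open Classical in
noncomputable def AH (par : Fin n → Fin n) (i j' : Fin n) : Finset (Fin n) :=
  Finset.univ.filter fun v => ¬ desc par i v ∧ i < v ∧ v < j'

open Classical in
noncomputable def PD (par : Fin n → Fin n) (i : Fin n) : Finset (Fin n) :=
  Finset.univ.filter fun v => i < v ∧ desc par i v

open Classical in
noncomputable def PN (par : Fin n → Fin n) (i : Fin n) : Finset (Fin n) :=
  Finset.univ.filter fun v => i < v ∧ ¬ desc par i v

noncomputable def prodP (par : Fin n → Fin n) (p : Fin n → S → S → ℝ)
    (P : Finset (Fin n)) (x : Fin n → S) : ℝ :=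
  ∏ v ∈ P, p v (x v) (x (par v))

open Classical in
noncomputable def gG (par : Fin n → Fin n) (d : S) (i j' : Fin n) (w : S)
    (s : {v : Fin n // j' ≤ v} → S) : Fin n → S :=
  fun v => if desc par i v then (if h : j' ≤ v then s ⟨v, h⟩ else if v = i then w else d) else d

open Classical in
noncomputable def gH (par : Fin n → Fin n) (d : S) (i j' : Fin n) (y : Fin n → S)
    (s : {v : Fin n // j' ≤ v} → S) : Fin n → S :=
  fun v => if desc par i v then d else (if v < i then y v else if h : j' ≤ v then s ⟨v, h⟩ else d)

open Classical in
noncomputable def Gset (par : Fin n → Fin n) (d : S) (i j' : Fin n) (w : S)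
    (s : {v : Fin n // j' ≤ v} → S) : Finset (Fin n → S) :=
  Finset.univ.filter fun x => ∀ v ∉ AG par i j', x v = gG par d i j' w s v

open Classical in
noncomputable def Hset (par : Fin n → Fin n) (d : S) (i j' : Fin n) (y : Fin n → S)
    (s : {v : Fin n // j' ≤ v} → S) : Finset (Fin n → S) :=
  Finset.univ.filter fun x => ∀ v ∉ AH par i j', x v = gH par d i j' y s v

open Classical in
theorem tel (par : Fin n → Fin n) (p : Fin n → S → S → ℝ)
    (hpar : ∀ v : Fin n, (v : ℕ) ≠ 0 → par v < v)
    (hp1 : ∀ v : Fin n, (v : ℕ) ≠ 0 → ∀ b, ∑ a, p v a b = 1) :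
    ∀ (N : ℕ) (A : Finset (Fin n)), A.card ≤ N → (∀ v ∈ A, (v : ℕ) ≠ 0) →
      ∀ g : Fin n → S,
      ∑ x ∈ Finset.univ.filter (fun x : Fin n → S => ∀ v ∉ A, x v = g v),
        ∏ v ∈ A, p v (x v) (x (par v)) = 1 := by
  intro N
  induction N with
  | zero =>
    intro A hcard _ g
    have hA : A = ∅ := Finset.card_eq_zero.mp (Nat.le_zero.mp hcard)
    subst hA
    have hset : Finset.univ.filter
        (fun x : Fin n → S => ∀ v ∉ (∅ : Finset (Fin n)), x v = g v) = {g} := by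
      ext x
      simp [funext_iff]
    rw [hset]
    simp
  | succ N ih =>
    intro A hcard h0 g
    rcases eq_or_ne A ∅ with rfl | hne
    · have hset : Finset.univ.filter
          (fun x : Fin n → S => ∀ v ∉ (∅ : Finset (Fin n)), x v = g v) = {g} := by
        ext x
        simp [funext_iff]
      rw [hset]
      simp
    · have hA : A.Nonempty := Finset.nonempty_iff_ne_empty.mpr hne
      set m := A.max' hA with hm
      have hmA : m ∈ A := A.max'_mem hA
      have hm0 : (m : ℕ) ≠ 0 := h0 m hmA
      have key : ∑ x ∈ Finset.univ.filter (fun x : Fin n → S => ∀ v ∉ A, x v = g v),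
          ∏ v ∈ A, p v (x v) (x (par v))
          = ∑ cz ∈ (Finset.univ : Finset S) ×ˢ
              (Finset.univ.filter (fun x : Fin n → S => ∀ v ∉ A.erase m, x v = g v)),
              p m cz.1 (cz.2 (par m)) * ∏ v ∈ A.erase m, p v (cz.2 v) (cz.2 (par v)) := by
        refine Finset.sum_nbij' (fun x => (x m, Function.update x m (g m)))
          (fun cz => Function.update cz.2 m cz.1) ?_ ?_ ?_ ?_ ?_
        · intro x hx
          simp only [Finset.mem_filter, Finset.mem_univ, true_and] at hx ⊢
          refine Finset.mem_product.mpr ⟨Finset.mem_univ _, ?_⟩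
          simp only [Finset.mem_filter, Finset.mem_univ, true_and]
          intro v hv
          rcases eq_or_ne v m with rfl | hvm
          · simp [Function.update_self]
          · rw [Function.update_of_ne hvm]
            exact hx v (fun hvA => hv (Finset.mem_erase.mpr ⟨hvm, hvA⟩))
        · intro cz hcz
          have hcz2 := (Finset.mem_filter.mp (Finset.mem_product.mp hcz).2).2
          simp only [Finset.mem_filter, Finset.mem_univ, true_and]
          intro v hv
          have hvm : v ≠ m := fun h => hv (h ▸ hmA)
          rw [Function.update_of_ne hvm]
          exact hcz2 v (fun h => hv (Finset.mem_of_mem_erase h))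
        · intro x hx
          funext v
          rcases eq_or_ne v m with rfl | hvm
          · simp
          · simp [Function.update_of_ne hvm]
        · intro cz hcz
          have hcz2 := (Finset.mem_filter.mp (Finset.mem_product.mp hcz).2).2
          have h2 : cz.2 m = g m := hcz2 m (Finset.notMem_erase m A)
          refine Prod.ext ?_ ?_
          · simp
          · funext v
            rcases eq_or_ne v m with rfl | hvm
            · simp [h2]
            · simp [Function.update_of_ne hvm]
        · intro x hx
          dsimp only
          rw [← Finset.mul_prod_erase A _ hmA]
          congr 1
          · rw [Function.update_of_ne (ne_of_lt (hpar m hm0)) ]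
          · refine Finset.prod_congr rfl fun v hv => ?_
            have hvA := Finset.mem_of_mem_erase hv
            have hvm : v ≠ m := (Finset.mem_erase.mp hv).1
            have hpvm : par v ≠ m := by
              intro h
              have h1 : par v < v := hpar v (h0 v hvA)
              have h2 : v ≤ m := A.le_max' v hvA
              rw [h] at h1
              exact absurd h2 (not_le.mpr h1)
            rw [Function.update_of_ne hvm, Function.update_of_ne hpvm]
      rw [key, Finset.sum_product]
      rw [Finset.sum_comm]
      have : ∀ z ∈ Finset.univ.filter (fun x : Fin n → S => ∀ v ∉ A.erase m, x v = g v),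
          ∑ c : S, p m c (z (par m)) * ∏ v ∈ A.erase m, p v (z v) (z (par v))
            = ∏ v ∈ A.erase m, p v (z v) (z (par v)) := by
        intro z _
        rw [← Finset.sum_mul, hp1 m hm0, one_mul]
      rw [Finset.sum_congr rfl this]
      exact ih (A.erase m) (by
        have := Finset.card_erase_of_mem hmA
        omega) (fun v hv => h0 v (Finset.mem_of_mem_erase hv)) g

theorem fact (par : Fin n → Fin n) (p : Fin n → S → S → ℝ)
    (hpar : ∀ v : Fin n, (v : ℕ) ≠ 0 → par v < v) (d : S)
    (i j' : Fin n) (hij : i < j') (y : Fin n → S) (s : {v : Fin n // j' ≤ v} → S) :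
    condP par p i j' y s =
      (∑ x ∈ Gset par d i j' (y i) s, prodP par p (PD par i) x) *
      (∑ x ∈ Hset par d i j' y s, prodP par p (PN par i) x) := by
  classical
  have hdesci : desc par i i := Relation.ReflTransGen.refl
  rw [Finset.sum_mul_sum, ← Finset.sum_product']
  unfold condP
  refine Finset.sum_nbij'
    (fun x => ((fun v => if desc par i v then x v else d,
                fun v => if desc par i v then d else x v) : (Fin n → S) × (Fin n → S)))
    (fun ab => fun v => if desc par i v then ab.1 v else ab.2 v) ?_ ?_ ?_ ?_ ?_
  · -- maps into product
    intro x hx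
    simp only [Finset.mem_filter, Finset.mem_univ, true_and] at hx
    obtain ⟨hx1, hx2⟩ := hx
    refine Finset.mem_product.mpr ⟨?_, ?_⟩
    · simp only [Gset, Finset.mem_filter, Finset.mem_univ, true_and]
      intro v hv
      simp only [AG, Finset.mem_filter, Finset.mem_univ, true_and, not_and] at hv
      by_cases hd : desc par i v
      · simp only [if_pos hd, gG, hd, if_true]
        by_cases hjv : j' ≤ v
        · rw [dif_pos hjv]
          exact hx2 ⟨v, hjv⟩
        · rw [dif_neg hjv]
          have hvj : v < j' := not_le.mp hjv
          have hiv : ¬ i < v := fun h => (hv hd h) hvj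
          have hvi : v = i := le_antisymm (not_lt.mp hiv) (desc_le hpar hd)
          rw [if_pos hvi, hvi]
          exact hx1 i le_rfl
      · simp [if_neg hd, gG, hd]
    · simp only [Hset, Finset.mem_filter, Finset.mem_univ, true_and]
      intro v hv
      simp only [AH, Finset.mem_filter, Finset.mem_univ, true_and, not_and] at hv
      by_cases hd : desc par i v
      · simp [if_pos hd, gH, hd]
      · simp only [if_neg hd, gH, hd, if_false]
        by_cases hvi : v < i
        · rw [if_pos hvi]
          exact hx1 v (le_of_lt hvi)
        · rw [if_neg hvi]
          have hne : v ≠ i := fun h => hd (h ▸ hdesci)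
          have hiv : i < v := lt_of_le_of_ne (not_lt.mp hvi) (Ne.symm hne)
          have hjv : j' ≤ v := by
            by_contra hjv
            exact (hv hd hiv) (not_le.mp hjv)
          rw [dif_pos hjv]
          exact hx2 ⟨v, hjv⟩
  · -- back into condP set
    intro ab hab
    obtain ⟨ha, hb⟩ := Finset.mem_product.mp hab
    simp only [Gset, Finset.mem_filter, Finset.mem_univ, true_and] at ha
    simp only [Hset, Finset.mem_filter, Finset.mem_univ, true_and] at hb
    simp only [Finset.mem_filter, Finset.mem_univ, true_and]
    constructor
    · intro v hvle
      by_cases hd : desc par i v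
      · have hvi : v = i := le_antisymm hvle (desc_le hpar hd)
        have hnotin : i ∉ AG par i j' := by
          simp [AG]
        rw [hvi, if_pos hdesci, ha i hnotin, gG, if_pos hdesci, dif_neg (not_le.mpr hij),
          if_pos rfl]
      · have hne : v ≠ i := fun h => hd (h ▸ hdesci)
        have hvi : v < i := lt_of_le_of_ne hvle hne
        have hnotin : v ∉ AH par i j' := by
          simp only [AH, Finset.mem_filter, Finset.mem_univ, true_and, not_and]
          intro _ h
          exact absurd hvi (not_lt.mpr (le_of_lt h))
        rw [if_neg hd, hb v hnotin, gH, if_neg hd, if_pos hvi]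
    · intro v
      have hjv : j' ≤ v.1 := v.2
      have hiv : i < v.1 := lt_of_lt_of_le hij hjv
      by_cases hd : desc par i v.1
      · have hnotin : v.1 ∉ AG par i j' := by
          simp only [AG, Finset.mem_filter, Finset.mem_univ, true_and, not_and]
          exact fun _ _ => not_lt.mpr hjv
        rw [if_pos hd, ha v.1 hnotin, gG, if_pos hd, dif_pos hjv]
      · have hnotin : v.1 ∉ AH par i j' := by
          simp only [AH, Finset.mem_filter, Finset.mem_univ, true_and, not_and]
          exact fun _ _ => not_lt.mpr hjv
        rw [if_neg hd, hb v.1 hnotin, gH, if_neg hd, if_neg (not_lt.mpr (le_of_lt hiv)),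
          dif_pos hjv]
  · -- left inverse
    intro x hx
    funext v
    by_cases hd : desc par i v <;> simp [hd]
  · -- right inverse
    intro ab hab
    obtain ⟨ha, hb⟩ := Finset.mem_product.mp hab
    simp only [Gset, Finset.mem_filter, Finset.mem_univ, true_and] at ha
    simp only [Hset, Finset.mem_filter, Finset.mem_univ, true_and] at hb
    refine Prod.ext ?_ ?_
    · funext v
      by_cases hd : desc par i v
      · simp [hd]
      · simp only [hd, if_false]
        have hnotin : v ∉ AG par i j' := by
          simp only [AG, Finset.mem_filter, Finset.mem_univ, true_and, not_and]
          exact fun h => absurd h hd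
        rw [ha v hnotin, gG, if_neg hd]
    · funext v
      by_cases hd : desc par i v
      · simp only [hd, if_true]
        have hnotin : v ∉ AH par i j' := by
          simp only [AH, Finset.mem_filter, Finset.mem_univ, true_and, not_and]
          exact fun h => absurd hd h
        rw [hb v hnotin, gH, if_pos hd]
      · simp [hd]
  · -- summand
    intro x hx
    simp only [Finset.mem_filter, Finset.mem_univ, true_and] at hx
    dsimp only
    rw [← Finset.prod_filter_mul_prod_filter_not (Finset.univ.filter (fun v : Fin n => i < v))
      (fun v => desc par i v)]
    have e1 : (Finset.univ.filter (fun v : Fin n => i < v)).filter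
        (fun v => desc par i v) = PD par i := by
      ext v
      simp [PD, Finset.mem_filter]
    have e2 : (Finset.univ.filter (fun v : Fin n => i < v)).filter
        (fun v => ¬ desc par i v) = PN par i := by
      ext v
      simp [PN, Finset.mem_filter]
    rw [e1, e2]
    unfold prodP
    congr 1
    · refine Finset.prod_congr rfl fun v hv => ?_
      simp only [PD, Finset.mem_filter, Finset.mem_univ, true_and] at hv
      obtain ⟨hiv, hd⟩ := hv
      have hdp : desc par i (par v) := desc_par hd (ne_of_gt hiv)
      dsimp only
      rw [if_pos hd, if_pos hdp]
    · refine Finset.prod_congr rfl fun v hv => ?_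
      simp only [PN, Finset.mem_filter, Finset.mem_univ, true_and] at hv
      obtain ⟨hiv, hd⟩ := hv
      have hdp : ¬ desc par i (par v) := fun h => hd (desc_step h (fin_ne_zero_of_lt hiv))
      dsimp only
      rw [if_neg hd, if_neg hdp]

open Classical in
theorem hsum (par : Fin n → Fin n) (p : Fin n → S → S → ℝ)
    (hpar : ∀ v : Fin n, (v : ℕ) ≠ 0 → par v < v) (d : S)
    (i j j₀ : Fin n) (hij : i < j) (hjj0 : j ≤ j₀)
    (hmin : ∀ v : Fin n, desc par i v → j ≤ v → j₀ ≤ v)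
    (y : Fin n → S) (t : {v : Fin n // j₀ ≤ v} → S) :
    ∑ s ∈ Finset.univ.filter (fun s : {v : Fin n // j ≤ v} → S =>
        (fun u : {v : Fin n // j₀ ≤ v} => s ⟨u.1, le_trans hjj0 u.2⟩) = t),
      ∑ x ∈ Hset par d i j y s, prodP par p (PN par i) x
      = ∑ x ∈ Hset par d i j₀ y t, prodP par p (PN par i) x := by
  classical
  have hdesci : desc par i i := Relation.ReflTransGen.refl
  rw [Finset.sum_sigma']
  refine Finset.sum_nbij' (fun sx => sx.2)
    (fun x => ⟨fun v => if h : j₀ ≤ v.1 then t ⟨v.1, h⟩ else x v.1, x⟩) ?_ ?_ ?_ ?_ ?_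
  · intro sx hsx
    obtain ⟨hs1, hs2⟩ := Finset.mem_sigma.mp hsx
    have hfib : (fun u : {v : Fin n // j₀ ≤ v} => sx.1 ⟨u.1, le_trans hjj0 u.2⟩) = t :=
      (Finset.mem_filter.mp hs1).2
    simp only [Hset, Finset.mem_filter, Finset.mem_univ, true_and] at hs2 ⊢
    intro v hv
    simp only [AH, Finset.mem_filter, Finset.mem_univ, true_and, not_and] at hv
    by_cases hd : desc par i v
    · have hvj : v ∉ AH par i j := by simp [AH, hd]
      rw [hs2 v hvj]
      simp [gH, hd]
    · by_cases hiv : i < v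
      · have hvj0 : j₀ ≤ v := not_lt.mp (hv hd hiv)
        have hvj : j ≤ v := le_trans hjj0 hvj0
        have hnm : v ∉ AH par i j := by
          simp only [AH, Finset.mem_filter, Finset.mem_univ, true_and, not_and]
          exact fun _ _ => not_lt.mpr hvj
        rw [hs2 v hnm]
        simp only [gH, if_neg hd, if_neg (not_lt.mpr (le_of_lt hiv)), dif_pos hvj, dif_pos hvj0]
        exact congrFun hfib ⟨v, hvj0⟩
      · have hne : v ≠ i := fun h => hd (h ▸ hdesci)
        have hvi : v < i := lt_of_le_of_ne (not_lt.mp hiv) hne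
        have hnm : v ∉ AH par i j := by
          simp only [AH, Finset.mem_filter, Finset.mem_univ, true_and, not_and]
          exact fun _ h => absurd hiv (not_not_intro h)
        rw [hs2 v hnm]
        simp [gH, hd, hvi]
  · intro x hx
    simp only [Hset, Finset.mem_filter, Finset.mem_univ, true_and] at hx
    refine Finset.mem_sigma.mpr ⟨?_, ?_⟩
    · simp only [Finset.mem_filter, Finset.mem_univ, true_and]
      funext u
      rw [dif_pos u.2]
    · simp only [Hset, Finset.mem_filter, Finset.mem_univ, true_and]
      intro v hv
      simp only [AH, Finset.mem_filter, Finset.mem_univ, true_and, not_and] at hv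
      by_cases hd : desc par i v
      · have hvj : v ∉ AH par i j₀ := by simp [AH, hd]
        rw [hx v hvj]
        simp [gH, hd]
      · by_cases hiv : i < v
        · have hvj : j ≤ v := not_lt.mp (hv hd hiv)
          simp only [gH, if_neg hd, if_neg (not_lt.mpr (le_of_lt hiv)), dif_pos hvj]
          by_cases h0 : j₀ ≤ v
          · rw [dif_pos h0]
            have hnm : v ∉ AH par i j₀ := by
              simp only [AH, Finset.mem_filter, Finset.mem_univ, true_and, not_and]
              exact fun _ _ => not_lt.mpr h0
            rw [hx v hnm]
            simp [gH, hd, not_lt.mpr (le_of_lt hiv), h0]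
          · rw [dif_neg h0]
        · have hne : v ≠ i := fun h => hd (h ▸ hdesci)
          have hvi : v < i := lt_of_le_of_ne (not_lt.mp hiv) hne
          have hnm : v ∉ AH par i j₀ := by
            simp only [AH, Finset.mem_filter, Finset.mem_univ, true_and, not_and]
            exact fun _ h => absurd hiv (not_not_intro h)
          rw [hx v hnm]
          simp [gH, hd, hvi]
  · intro sx hsx
    obtain ⟨hs1, hs2⟩ := Finset.mem_sigma.mp hsx
    have hfib : (fun u : {v : Fin n // j₀ ≤ v} => sx.1 ⟨u.1, le_trans hjj0 u.2⟩) = t :=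
      (Finset.mem_filter.mp hs1).2
    simp only [Hset, Finset.mem_filter, Finset.mem_univ, true_and] at hs2
    obtain ⟨s1, x1⟩ := sx
    dsimp only at hfib hs2 ⊢
    have h1 : (fun v : {v : Fin n // j ≤ v} =>
        if h : j₀ ≤ v.1 then t ⟨v.1, h⟩ else x1 v.1) = s1 := by
      funext v
      by_cases h0 : j₀ ≤ v.1
      · rw [dif_pos h0, ← hfib]
      · rw [dif_neg h0]
        have hd : ¬ desc par i v.1 := by
          intro hd
          exact h0 (hmin v.1 hd v.2)
        have hiv : i < v.1 := lt_of_lt_of_le hij v.2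
        have hnm : v.1 ∉ AH par i j := by
          simp only [AH, Finset.mem_filter, Finset.mem_univ, true_and, not_and]
          exact fun _ _ => not_lt.mpr v.2
        rw [hs2 v.1 hnm]
        simp [gH, hd, not_lt.mpr (le_of_lt hiv), v.2]
    exact Sigma.ext h1 (heq_of_eq rfl)
  · intro x hx
    rfl
  · intro sx hsx
    rfl

end Aux

/-- If `T_i^j = ∅` then `η_{ij} = 0`; otherwise `η_{ij} = η_{i j₀}` with `j₀ = min T_i^j`. -/
theorem eta_eq_eta_min {n : ℕ} {S : Type*} [Fintype S]
    (par : Fin n → Fin n) (dep : Fin n → ℕ)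
    (hroot : ∀ v : Fin n, (v : ℕ) = 0 → dep v = 0)
    (hpar : ∀ v : Fin n, (v : ℕ) ≠ 0 → par v < v ∧ dep v = dep (par v) + 1)
    (hbfs : ∀ u v : Fin n, dep u < dep v → u < v)
    (p0 : S → ℝ) (hp00 : ∀ s, 0 ≤ p0 s) (hp01 : ∑ s, p0 s = 1)
    (p : Fin n → S → S → ℝ)
    (hp0 : ∀ v : Fin n, (v : ℕ) ≠ 0 → ∀ b a, 0 ≤ p v a b)
    (hp1 : ∀ v : Fin n, (v : ℕ) ≠ 0 → ∀ b, ∑ a, p v a b = 1)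
    (i j : Fin n) (hij : i < j)
    (y y' : Fin n → S) (hyy' : ∀ v, v < i → y v = y' v) :
    (Tij par i j = ∅ → eta par p i j y y' = 0) ∧
    (∀ h : (Tij par i j).Nonempty,
      eta par p i j y y' = eta par p i ((Tij par i j).min' h) y y') := by
  classical
  have hpar' : ∀ v : Fin n, (v : ℕ) ≠ 0 → par v < v := fun v hv => (hpar v hv).1
  have hS : Nonempty S := by
    by_contra h
    rw [not_nonempty_iff] at h
    rw [Finset.univ_eq_empty, Finset.sum_empty] at hp01
    exact absurd hp01 (by norm_num)
  obtain ⟨d⟩ := hS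
  have hgHeq : ∀ (j' : Fin n) (s : {v : Fin n // j' ≤ v} → S),
      gH par d i j' y s = gH par d i j' y' s := by
    intro j' s
    funext v
    unfold gH
    by_cases hd : desc par i v
    · simp [hd]
    · simp only [if_neg hd]
      by_cases hvi : v < i
      · simp [hvi, hyy' v hvi]
      · simp [hvi]
  have hHeq : ∀ (j' : Fin n) (s : {v : Fin n // j' ≤ v} → S),
      Hset par d i j' y s = Hset par d i j' y' s := by
    intro j' s
    unfold Hset
    rw [hgHeq]
  have hH0 : ∀ (yy : Fin n → S) (j' : Fin n) (s : {v : Fin n // j' ≤ v} → S),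
      0 ≤ ∑ x ∈ Hset par d i j' yy s, prodP par p (PN par i) x := by
    intro yy j' s
    refine Finset.sum_nonneg fun x _ => Finset.prod_nonneg fun v hv => ?_
    simp only [PN, Finset.mem_filter, Finset.mem_univ, true_and] at hv
    exact hp0 v (fin_ne_zero_of_lt hv.1) _ _
  constructor
  · -- empty case
    intro hemp
    have hno : ∀ v : Fin n, ¬(desc par i v ∧ j ≤ v) := by
      intro v hv
      have hmem : v ∈ Tij par i j := by
        simp [Tij, hv.1, hv.2]
      rw [hemp] at hmem
      exact absurd hmem (Finset.notMem_empty v)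
    have hAG : AG par i j = PD par i := by
      ext v
      simp only [AG, PD, Finset.mem_filter, Finset.mem_univ, true_and]
      constructor
      · rintro ⟨h1, h2, _⟩; exact ⟨h2, h1⟩
      · rintro ⟨h2, h1⟩
        refine ⟨h1, h2, ?_⟩
        by_contra hjv
        exact hno v ⟨h1, not_lt.mp hjv⟩
    have hG1 : ∀ (w : S) (s : {v : Fin n // j ≤ v} → S),
        ∑ x ∈ Gset par d i j w s, prodP par p (PD par i) x = 1 := by
      intro w s
      unfold Gset prodP
      rw [hAG]
      exact tel par p hpar' hp1 (PD par i).card (PD par i) le_rfl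
        (fun v hv => by
          simp only [PD, Finset.mem_filter, Finset.mem_univ, true_and] at hv
          exact fin_ne_zero_of_lt hv.1) _
    unfold eta
    rw [Finset.sum_eq_zero, mul_zero]
    intro s _
    rw [fact par p hpar' d i j hij y s, fact par p hpar' d i j hij y' s, hHeq j s,
      hG1, hG1]
    simp
  · -- nonempty case
    intro hne
    set j₀ := (Tij par i j).min' hne with hj₀def
    have hj₀mem : desc par i j₀ ∧ j ≤ j₀ := by
      have h1 := (Tij par i j).min'_mem hne
      simp only [Tij, Finset.mem_filter, Finset.mem_univ, true_and] at h1
      exact h1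
    have hjj0 : j ≤ j₀ := hj₀mem.2
    have hij0 : i < j₀ := lt_of_lt_of_le hij hjj0
    have hmin : ∀ v : Fin n, desc par i v → j ≤ v → j₀ ≤ v := by
      intro v h1 h2
      exact Finset.min'_le _ v (by simp [Tij, h1, h2])
    have hAGeq : AG par i j = AG par i j₀ := by
      ext v
      simp only [AG, Finset.mem_filter, Finset.mem_univ, true_and]
      constructor
      · rintro ⟨h1, h2, h3⟩; exact ⟨h1, h2, lt_of_lt_of_le h3 hjj0⟩
      · rintro ⟨h1, h2, h3⟩
        refine ⟨h1, h2, ?_⟩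
        by_contra hv
        exact absurd (hmin v h1 (not_lt.mp hv)) (not_le.mpr h3)
    have hgGeq : ∀ (w : S) (s : {v : Fin n // j ≤ v} → S), gG par d i j w s
        = gG par d i j₀ w (fun u : {v : Fin n // j₀ ≤ v} => s ⟨u.1, le_trans hjj0 u.2⟩) := by
      intro w s
      funext v
      unfold gG
      by_cases hd : desc par i v
      · simp only [if_pos hd]
        by_cases h0 : j₀ ≤ v
        · rw [dif_pos h0, dif_pos (le_trans hjj0 h0)]
        · rw [dif_neg h0, dif_neg (fun hjv => h0 (hmin v hd hjv))]
      · simp [hd]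
    have hGeq : ∀ (w : S) (s : {v : Fin n // j ≤ v} → S),
        (∑ x ∈ Gset par d i j w s, prodP par p (PD par i) x)
        = ∑ x ∈ Gset par d i j₀ w (fun u : {v : Fin n // j₀ ≤ v} => s ⟨u.1, le_trans hjj0 u.2⟩),
            prodP par p (PD par i) x := by
      intro w s
      unfold Gset
      rw [hAGeq, hgGeq]
    have lhs_eq : ∀ s : {v : Fin n // j ≤ v} → S,
        |condP par p i j y s - condP par p i j y' s|
        = |(∑ x ∈ Gset par d i j₀ (y i) (fun u : {v : Fin n // j₀ ≤ v} =>
              s ⟨u.1, le_trans hjj0 u.2⟩), prodP par p (PD par i) x)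
            - ∑ x ∈ Gset par d i j₀ (y' i) (fun u : {v : Fin n // j₀ ≤ v} =>
              s ⟨u.1, le_trans hjj0 u.2⟩), prodP par p (PD par i) x|
          * (∑ x ∈ Hset par d i j y' s, prodP par p (PN par i) x) := by
      intro s
      rw [fact par p hpar' d i j hij y s, fact par p hpar' d i j hij y' s, hHeq j s,
        ← sub_mul, abs_mul, abs_of_nonneg (hH0 y' j s), hGeq (y i) s, hGeq (y' i) s]
    unfold eta
    congr 1
    rw [← Finset.sum_fiberwise_of_maps_to
      (g := fun s : {v : Fin n // j ≤ v} → S =>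
        (fun u : {v : Fin n // j₀ ≤ v} => s ⟨u.1, le_trans hjj0 u.2⟩))
      (t := (Finset.univ : Finset ({v : Fin n // j₀ ≤ v} → S)))
      (fun x _ => Finset.mem_univ _)
      (fun s => |condP par p i j y s - condP par p i j y' s|)]
    refine Finset.sum_congr rfl fun t _ => ?_
    have hinner : ∀ s ∈ Finset.univ.filter (fun s : {v : Fin n // j ≤ v} → S =>
        (fun u : {v : Fin n // j₀ ≤ v} => s ⟨u.1, le_trans hjj0 u.2⟩) = t),
        |condP par p i j y s - condP par p i j y' s|
        = |(∑ x ∈ Gset par d i j₀ (y i) t, prodP par p (PD par i) x)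
            - ∑ x ∈ Gset par d i j₀ (y' i) t, prodP par p (PD par i) x|
          * (∑ x ∈ Hset par d i j y' s, prodP par p (PN par i) x) := by
      intro s hs
      have hfib := (Finset.mem_filter.mp hs).2
      rw [lhs_eq s, hfib]
    rw [Finset.sum_congr rfl hinner, ← Finset.mul_sum,
      hsum par p hpar' d i j j₀ hij hjj0 hmin y' t,
      fact par p hpar' d i j₀ hij0 y t, fact par p hpar' d i j₀ hij0 y' t, hHeq j₀ t,
      ← sub_mul, abs_mul, abs_of_nonneg (hH0 y' j₀ t)]
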